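/- arXiv:1508.00289 — 2 statements merged into one kernel-verified Lean document; each statement's English description precedes it below -/
import Mathlib

section
/- Let Π be a real m×n matrix, Π♯ a real n×m matrix with Π Π♯ = I_m, and let W be a symmetric positive semidefinite real n×n matrix satisfying the orthogonality condition (Π♯)ᵀ W (I_n − Π♯Π) = 0. Let b, y ∈ ℝⁿ, b̄ ∈ ℝᵐ, and set b̃ = Π♯ b̄ + (I_n − Π♯Π) y. Then (b − b̃)ᵀ W (b − b̃) = (Πb − b̄)ᵀ (Π♯)ᵀ W Π♯ (Πb − b̄) + ((I_n − Π♯Π)(b − y))ᵀ W ((I_n − Π♯Π)(b − y)). -/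
open Matrix

/-! The mismatch splits as `b - b̃ = Π♯ (Π b - b̄) + (I - Π♯ Π)(b - y)`, and the orthogonality
condition says exactly that the two summands are `W`-orthogonal; for symmetric `W` this kills
both cross terms of the quadratic form. -/

section

variable {R : Type*} [CommRing R] {k l n : Type*} [Fintype k] [Fintype l] [Fintype n]

theorem mulVec_dotProduct_mulVec (M : Matrix n k R) (N : Matrix n l R) (c : k → R) (d : l → R) :
    M *ᵥ c ⬝ᵥ N *ᵥ d = c ⬝ᵥ (Mᵀ * N) *ᵥ d := by
  rw [← mulVec_mulVec, dotProduct_mulVec c, vecMul_transpose]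

theorem Matrix.IsSymm.add_dotProduct_mulVec_add {W : Matrix n n R} (hW : W.IsSymm)
    {u v : n → R} (huv : u ⬝ᵥ W *ᵥ v = 0) :
    (u + v) ⬝ᵥ W *ᵥ (u + v) = u ⬝ᵥ W *ᵥ u + v ⬝ᵥ W *ᵥ v := by
  have hvu : v ⬝ᵥ W *ᵥ u = 0 := by
    rw [dotProduct_mulVec, ← mulVec_transpose, hW.eq, dotProduct_comm, huv]
  rw [mulVec_add, add_dotProduct, dotProduct_add, dotProduct_add, huv, hvu, add_zero, zero_add]

variable [DecidableEq n]

theorem sub_mulVec_add_one_sub_mul_mulVec (P : Matrix k n R) (Ps : Matrix n k R)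
    (b y : n → R) (bb : k → R) :
    b - (Ps *ᵥ bb + (1 - Ps * P) *ᵥ y) = Ps *ᵥ (P *ᵥ b - bb) + (1 - Ps * P) *ᵥ (b - y) := by
  simp only [sub_mulVec, mulVec_sub, one_mulVec, ← mulVec_mulVec]
  abel

end

theorem weighted_norm_splitting_general
    {m n : ℕ} (P : Matrix (Fin m) (Fin n) ℝ) (Ps : Matrix (Fin n) (Fin m) ℝ)
    (W : Matrix (Fin n) (Fin n) ℝ) (hW : W.PosSemidef)
    (horth : Ps.transpose * W * ((1 : Matrix (Fin n) (Fin n) ℝ) - Ps * P) = 0)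
    (b y : Fin n → ℝ) (bb : Fin m → ℝ)
    (bt : Fin n → ℝ)
    (hbt : bt = Ps.mulVec bb + ((1 : Matrix (Fin n) (Fin n) ℝ) - Ps * P).mulVec y) :
    (b - bt) ⬝ᵥ W.mulVec (b - bt)
      = (P.mulVec b - bb) ⬝ᵥ (Ps.transpose * W * Ps).mulVec (P.mulVec b - bb)
        + (((1 : Matrix (Fin n) (Fin n) ℝ) - Ps * P).mulVec (b - y)) ⬝ᵥ
            W.mulVec (((1 : Matrix (Fin n) (Fin n) ℝ) - Ps * P).mulVec (b - y)) := by
  have hWsymm : W.IsSymm := by simpa using hW.isHermitian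
  have hcross : Ps *ᵥ (P *ᵥ b - bb) ⬝ᵥ W *ᵥ ((1 - Ps * P) *ᵥ (b - y)) = 0 := by
    rw [mulVec_mulVec, mulVec_dotProduct_mulVec, ← Matrix.mul_assoc, horth, zero_mulVec,
      dotProduct_zero]
  rw [hbt, sub_mulVec_add_one_sub_mul_mulVec, hWsymm.add_dotProduct_mulVec_add hcross,
    mulVec_mulVec, mulVec_dotProduct_mulVec, Matrix.mul_assoc]

/-- Weighted Pythagoras identity for the drift mismatch: if `P Ps = I_m`, `W` is symmetric
positive semidefinite with `(Ps)ᵀ W (I − Ps P) = 0`, and `b̃ = Ps b̄ + (I − Ps P) y`, then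
`(b − b̃)ᵀ W (b − b̃) = (P b − b̄)ᵀ (Ps)ᵀ W Ps (P b − b̄)
  + ((I − Ps P)(b − y))ᵀ W ((I − Ps P)(b − y))`. -/
theorem weighted_norm_splitting
    {m n : ℕ} (P : Matrix (Fin m) (Fin n) ℝ) (Ps : Matrix (Fin n) (Fin m) ℝ)
    (hPs : P * Ps = 1)
    (W : Matrix (Fin n) (Fin n) ℝ) (hW : W.PosSemidef)
    (horth : Ps.transpose * W * ((1 : Matrix (Fin n) (Fin n) ℝ) - Ps * P) = 0)
    (b y : Fin n → ℝ) (bb : Fin m → ℝ)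
    (bt : Fin n → ℝ)
    (hbt : bt = Ps.mulVec bb + ((1 : Matrix (Fin n) (Fin n) ℝ) - Ps * P).mulVec y) :
    (b - bt) ⬝ᵥ W.mulVec (b - bt)
      = (P.mulVec b - bb) ⬝ᵥ (Ps.transpose * W * Ps).mulVec (P.mulVec b - bb)
        + (((1 : Matrix (Fin n) (Fin n) ℝ) - Ps * P).mulVec (b - y)) ⬝ᵥ
            W.mulVec (((1 : Matrix (Fin n) (Fin n) ℝ) - Ps * P).mulVec (b - y)) :=
  weighted_norm_splitting_general P Ps W hW horth b y bb bt hbt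
end

section
/- Let μ be a probability measure on ℝⁿ, Π a real m×n matrix, Π♯ a real n×m matrix with Π Π♯ = I_m, and W : ℝⁿ → ℝ^{n×n} a measurable map into symmetric positive semidefinite matrices with (Π♯)ᵀ W(x) (I_n − Π♯Π) = 0 for all x. Let Θ be a parameter set, b : ℝⁿ → ℝⁿ and y : ℝⁿ → ℝⁿ measurable (y independent of the parameter), b̄ : ℝᵐ × Θ → ℝᵐ, and for each θ ∈ Θ define b̃(x;θ) = Π♯ b̄(Πx;θ) + (I_n − Π♯Π)y(x). Assume that for each θ the functions x ↦ (b(x) − b̃(x;θ))ᵀW(x)(b(x) − b̃(x;θ)) and x ↦ ((I_n − Π♯Π)(b(x) − y(x)))ᵀW(x)((I_n − Π♯Π)(b(x) − y(x))) are μ-integrable. Then the two functions F(θ) = ∫ (1/2)(b(x) − b̃(x;θ))ᵀW(x)(b(x) − b̃(x;θ)) dμ(x) and G(θ) = ∫ (1/2)(Πb(x) − b̄(Πx;θ))ᵀ(Π♯)ᵀW(x)Π♯(Πb(x) − b̄(Πx;θ)) dμ(x) differ by a constant independent of θ; in particular F and G have the same set of minimizers over Θ. -/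
open Matrix MeasureTheory
open scoped BigOperators

lemma fm_dot {m n : ℕ} (Ps : Matrix (Fin n) (Fin m) ℝ) (W : Matrix (Fin n) (Fin n) ℝ)
    (a : Fin m → ℝ) (u : Fin n → ℝ) :
    Ps.mulVec a ⬝ᵥ W.mulVec u = a ⬝ᵥ (Ps.transpose * W).mulVec u := by
  rw [← Matrix.vecMul_transpose, Matrix.dotProduct_mulVec, Matrix.vecMul_vecMul,
    ← Matrix.dotProduct_mulVec]

lemma fm_key {m n : ℕ} (P : Matrix (Fin m) (Fin n) ℝ) (Ps : Matrix (Fin n) (Fin m) ℝ)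
    (W : Matrix (Fin n) (Fin n) ℝ) (hWsym : W.transpose = W)
    (horth : Ps.transpose * W * ((1 : Matrix (Fin n) (Fin n) ℝ) - Ps * P) = 0)
    (v : Fin m → ℝ) (w : Fin n → ℝ) :
    (Ps.mulVec v + ((1 : Matrix (Fin n) (Fin n) ℝ) - Ps * P).mulVec w) ⬝ᵥ
      W.mulVec (Ps.mulVec v + ((1 : Matrix (Fin n) (Fin n) ℝ) - Ps * P).mulVec w)
    = v ⬝ᵥ (Ps.transpose * W * Ps).mulVec v
      + (((1 : Matrix (Fin n) (Fin n) ℝ) - Ps * P).mulVec w) ⬝ᵥ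
          W.mulVec (((1 : Matrix (Fin n) (Fin n) ℝ) - Ps * P).mulVec w) := by
  set Q := (1 : Matrix (Fin n) (Fin n) ℝ) - Ps * P with hQ
  have cross1 : Ps.mulVec v ⬝ᵥ W.mulVec (Q.mulVec w) = 0 := by
    rw [fm_dot, Matrix.mulVec_mulVec, Matrix.mul_assoc, ← Matrix.mul_assoc, horth]
    simp
  have cross2 : Q.mulVec w ⬝ᵥ W.mulVec (Ps.mulVec v) = 0 := by
    rw [Matrix.dotProduct_mulVec, ← Matrix.mulVec_transpose, hWsym, dotProduct_comm]
    exact cross1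
  have main : Ps.mulVec v ⬝ᵥ W.mulVec (Ps.mulVec v)
      = v ⬝ᵥ (Ps.transpose * W * Ps).mulVec v := by
    rw [fm_dot, Matrix.mulVec_mulVec]
  rw [Matrix.mulVec_add, dotProduct_add, add_dotProduct,
    add_dotProduct, cross1, cross2, main]
  ring


/-- Stationary force-matching theorem: the relative-entropy-rate functional
`F(θ) = ∫ ½ (b − b̃(·;θ))ᵀ W (b − b̃(·;θ)) dμ` and the coarse force-matching functional
`G(θ) = ∫ ½ (P b − b̄(P·;θ))ᵀ (Ps)ᵀ W Ps (P b − b̄(P·;θ)) dμ` differ by a constant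
independent of `θ`; in particular they have the same minimizers. -/
theorem force_matching_equivalence
    {m n : ℕ} {Θ : Type*}
    (μ : Measure (Fin n → ℝ)) [IsProbabilityMeasure μ]
    (P : Matrix (Fin m) (Fin n) ℝ) (Ps : Matrix (Fin n) (Fin m) ℝ)
    (hPs : P * Ps = 1)
    (W : (Fin n → ℝ) → Matrix (Fin n) (Fin n) ℝ)
    (hWmeas : ∀ i j, Measurable fun x => W x i j)
    (hWpsd : ∀ x, (W x).PosSemidef)
    (horth : ∀ x, Ps.transpose * W x * ((1 : Matrix (Fin n) (Fin n) ℝ) - Ps * P) = 0)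
    (b : (Fin n → ℝ) → Fin n → ℝ) (hb : ∀ i, Measurable fun x => b x i)
    (y : (Fin n → ℝ) → Fin n → ℝ) (hy : ∀ i, Measurable fun x => y x i)
    (bb : (Fin m → ℝ) → Θ → Fin m → ℝ)
    (bt : (Fin n → ℝ) → Θ → Fin n → ℝ)
    (hbt : ∀ x θ, bt x θ = Ps.mulVec (bb (P.mulVec x) θ)
      + ((1 : Matrix (Fin n) (Fin n) ℝ) - Ps * P).mulVec (y x))
    (hint1 : ∀ θ, Integrable
      (fun x => (b x - bt x θ) ⬝ᵥ (W x).mulVec (b x - bt x θ)) μ)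
    (hint2 : Integrable (fun x =>
      (((1 : Matrix (Fin n) (Fin n) ℝ) - Ps * P).mulVec (b x - y x)) ⬝ᵥ
        (W x).mulVec (((1 : Matrix (Fin n) (Fin n) ℝ) - Ps * P).mulVec (b x - y x))) μ) :
    (∃ c : ℝ, ∀ θ : Θ,
      (∫ x, (1/2) * ((b x - bt x θ) ⬝ᵥ (W x).mulVec (b x - bt x θ)) ∂μ)
        = (∫ x, (1/2) * ((P.mulVec (b x) - bb (P.mulVec x) θ) ⬝ᵥ
            (Ps.transpose * W x * Ps).mulVec (P.mulVec (b x) - bb (P.mulVec x) θ)) ∂μ) + c)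
    ∧ ∀ θ₀ : Θ,
      ((∀ θ, (∫ x, (1/2) * ((b x - bt x θ₀) ⬝ᵥ (W x).mulVec (b x - bt x θ₀)) ∂μ)
          ≤ ∫ x, (1/2) * ((b x - bt x θ) ⬝ᵥ (W x).mulVec (b x - bt x θ)) ∂μ)
        ↔ (∀ θ, (∫ x, (1/2) * ((P.mulVec (b x) - bb (P.mulVec x) θ₀) ⬝ᵥ
              (Ps.transpose * W x * Ps).mulVec (P.mulVec (b x) - bb (P.mulVec x) θ₀)) ∂μ)
            ≤ ∫ x, (1/2) * ((P.mulVec (b x) - bb (P.mulVec x) θ) ⬝ᵥ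
              (Ps.transpose * W x * Ps).mulVec (P.mulVec (b x) - bb (P.mulVec x) θ)) ∂μ)) := by

  -- decomposition of the residual
  set Q := (1 : Matrix (Fin n) (Fin n) ℝ) - Ps * P with hQ
  have decomp : ∀ x θ, b x - bt x θ
      = Ps.mulVec (P.mulVec (b x) - bb (P.mulVec x) θ) + Q.mulVec (b x - y x) := by
    intro x θ
    rw [hbt]
    simp only [hQ, Matrix.mulVec_sub, Matrix.sub_mulVec, Matrix.one_mulVec,
      Matrix.mulVec_mulVec]
    abel
  have hptwise : ∀ x θ, (b x - bt x θ) ⬝ᵥ (W x).mulVec (b x - bt x θ)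
      = (P.mulVec (b x) - bb (P.mulVec x) θ) ⬝ᵥ
          (Ps.transpose * W x * Ps).mulVec (P.mulVec (b x) - bb (P.mulVec x) θ)
        + (Q.mulVec (b x - y x)) ⬝ᵥ (W x).mulVec (Q.mulVec (b x - y x)) := by
    intro x θ
    rw [decomp x θ]
    exact fm_key P Ps (W x) (hWpsd x).1 (horth x) _ _
  have hint2' : Integrable (fun x =>
      (1/2 : ℝ) * ((Q.mulVec (b x - y x)) ⬝ᵥ (W x).mulVec (Q.mulVec (b x - y x)))) μ :=
    hint2.const_mul _
  have hint3 : ∀ θ, Integrable (fun x =>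
      (1/2 : ℝ) * ((P.mulVec (b x) - bb (P.mulVec x) θ) ⬝ᵥ
        (Ps.transpose * W x * Ps).mulVec (P.mulVec (b x) - bb (P.mulVec x) θ))) μ := by
    intro θ
    have := ((hint1 θ).sub hint2).const_mul (1/2 : ℝ)
    refine this.congr (Filter.Eventually.of_forall fun x => ?_)
    simp only [Pi.sub_apply]
    rw [hptwise x θ]
    ring
  have hF : ∀ θ, (∫ x, (1/2) * ((b x - bt x θ) ⬝ᵥ (W x).mulVec (b x - bt x θ)) ∂μ)
      = (∫ x, (1/2) * ((P.mulVec (b x) - bb (P.mulVec x) θ) ⬝ᵥ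
          (Ps.transpose * W x * Ps).mulVec (P.mulVec (b x) - bb (P.mulVec x) θ)) ∂μ)
        + ∫ x, (1/2 : ℝ) * ((Q.mulVec (b x - y x)) ⬝ᵥ (W x).mulVec (Q.mulVec (b x - y x))) ∂μ := by
    intro θ
    rw [← integral_add (hint3 θ) hint2']
    refine integral_congr_ae (Filter.Eventually.of_forall fun x => ?_)
    dsimp only
    rw [hptwise x θ]
    ring
  refine ⟨⟨_, hF⟩, fun θ₀ => ?_⟩
  constructor
  · intro h θ
    have := h θ
    rw [hF θ, hF θ₀] at this
    linarith
  · intro h θ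
    rw [hF θ, hF θ₀]
    linarith [h θ]
end
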